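/- arXiv:1107.4070 — 4 statements merged into one kernel-verified Lean document; each statement's English description precedes it below -/
import Mathlib

section
/- Let x_1, ..., x_n be vectors in R^N. Then the sum over all pairs i ≠ j of ⟨x_i, x_j⟩ is at most 4 times the maximum over subsets E of {1,...,n} of the double sum over i in E and j in the complement of E of ⟨x_i, x_j⟩. -/
/-! Averaging over all 2^n subsets E: an ordered pair i ≠ j is cut (i ∈ E, j ∉ E) by exactly
2^(n-2) of them, so the cut sums add up to 2^(n-2) times the off-diagonal sum, and the largest
cut sum is at least the average, a quarter of the off-diagonal sum. -/

open Finset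

section

variable {ι : Type*} [Fintype ι] [DecidableEq ι]

theorem card_filter_mem_and_notMem {i j : ι} (hij : i ≠ j) :
    #{E : Finset ι | i ∈ E ∧ j ∉ E} = 2 ^ (Fintype.card ι - 2) := by
  have hIcc : ({E : Finset ι | i ∈ E ∧ j ∉ E} : Finset _) = Icc {i} (univ.erase j) := by
    ext E
    simp [subset_iff, eq_comm]
  rw [hIcc, card_Icc_finset (by simpa using hij), card_erase_of_mem (mem_univ _), card_singleton,
    card_univ, Nat.sub_sub]

theorem sum_sum_sum_compl_eq_pow_nsmul {M : Type*} [AddCommMonoid M] (c : ι → ι → M) :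
    ∑ E : Finset ι, ∑ i ∈ E, ∑ j ∈ Eᶜ, c i j =
      2 ^ (Fintype.card ι - 2) • ∑ i, ∑ j ∈ univ \ {i}, c i j := by
  rw [sum_comm' (t' := univ) (s' := fun i => {E : Finset ι | i ∈ E}) (by simp), smul_sum]
  refine sum_congr rfl fun i _ => ?_
  rw [sum_comm' (t' := univ \ {i}) (s' := fun j => {E : Finset ι | i ∈ E ∧ j ∉ E}), smul_sum]
  · refine sum_congr rfl fun j hj => ?_
    rw [sum_const, card_filter_mem_and_notMem (by simpa [eq_comm] using hj)]
  · intro E j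
    simp only [mem_filter, mem_univ, true_and, mem_compl, mem_sdiff, mem_singleton]
    constructor
    · rintro ⟨hi, hj⟩; exact ⟨⟨hi, hj⟩, fun h => hj (h ▸ hi)⟩
    · rintro ⟨⟨hi, hj⟩, -⟩; exact ⟨hi, hj⟩

theorem sum_offDiag_le_four_mul_iSup_sum_compl (c : ι → ι → ℝ) :
    ∑ i, ∑ j ∈ univ \ {i}, c i j ≤ 4 * ⨆ E : Finset ι, ∑ i ∈ E, ∑ j ∈ Eᶜ, c i j := by
  set cut : Finset ι → ℝ := fun E => ∑ i ∈ E, ∑ j ∈ Eᶜ, c i j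
  have hcut_le : ∀ E, cut E ≤ ⨆ E, cut E := le_ciSup (Set.finite_range cut).bddAbove
  rcases lt_or_ge (Fintype.card ι) 2 with hcard | hcard
  · have : Subsingleton ι := Fintype.card_le_one_iff_subsingleton.mp (by omega)
    have hzero : ∑ i, ∑ j ∈ univ \ {i}, c i j = 0 :=
      sum_eq_zero fun i _ => by simp [sdiff_eq_empty_iff_subset, subset_iff, Subsingleton.elim _ i]
    have hcut_empty : cut ∅ = 0 := sum_empty
    linarith [hcut_le ∅]
  · have key : 2 ^ (Fintype.card ι - 2) * ∑ i, ∑ j ∈ univ \ {i}, c i j ≤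
        2 ^ (Fintype.card ι - 2) * (4 * ⨆ E, cut E) :=
      calc 2 ^ (Fintype.card ι - 2) * ∑ i, ∑ j ∈ univ \ {i}, c i j = ∑ E, cut E := by
            rw [sum_sum_sum_compl_eq_pow_nsmul c, nsmul_eq_mul, Nat.cast_pow, Nat.cast_ofNat]
        _ ≤ 2 ^ Fintype.card ι * ⨆ E, cut E := by
            simpa using sum_le_card_nsmul univ cut _ fun E _ => hcut_le E
        _ = 2 ^ (Fintype.card ι - 2) * (4 * ⨆ E, cut E) := by
            rw [← pow_sub_mul_pow 2 hcard]; ring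
    exact le_of_mul_le_mul_left key (by positivity)

end

theorem stmt0 (n N : ℕ) (x : Fin n → EuclideanSpace ℝ (Fin N)) :
    ∑ i : Fin n, ∑ j ∈ Finset.univ \ {i}, (inner ℝ (x i) (x j) : ℝ) ≤
      4 * ⨆ E : Finset (Fin n), ∑ i ∈ E, ∑ j ∈ Eᶜ, (inner ℝ (x i) (x j) : ℝ) :=
  sum_offDiag_le_four_mul_iSup_sum_compl fun i j => inner ℝ (x i) (x j)
end

section
/- Let ℓ_0 ≥ ℓ_1 ≥ ... ≥ ℓ_s be positive integers, and let F be the set of functions f : {1,...,ℓ_0} → {0,1,...,s} such that for every 1 ≤ i ≤ s the set {r : f(r) ≥ i} has cardinality at most ℓ_i. Then |F| ≤ ∏_{i=1}^{s} (e ℓ_{i-1}/ℓ_i)^{ℓ_i}. -/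
/-!
A function `f` with values in `{0, …, s + 1}` is determined by its clamp `min f s` together with
its top level set `{f = s + 1}`, a subset of `{min f s = s}` of size at most `ℓ (s + 1)`. By
induction on `s` the number of admissible functions is at most
`∏ᵢ ∑_{j ≤ ℓ i} C(ℓ (i - 1), j)`. Each factor is at most `(e ℓ (i - 1) / ℓ i) ^ ℓ i`: with
`x = ℓ i / ℓ (i - 1) ≤ 1`, multiplying it by `x ^ ℓ i` gives at most `(1 + x) ^ ℓ (i - 1) ≤ e ^ ℓ i`.
-/

open Finset Real

theorem card_filter_powerset_card_le_le_sum_choose {α : Type*} (T : Finset α) (k : ℕ) :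
    #{S ∈ T.powerset | #S ≤ k} ≤ ∑ j ∈ range (k + 1), (#T).choose j := by
  classical
  calc #{S ∈ T.powerset | #S ≤ k}
      ≤ #((range (k + 1)).biUnion fun j => T.powersetCard j) := by
        refine card_le_card fun S hS => ?_
        simp only [mem_filter, mem_powerset] at hS
        simp only [mem_biUnion, mem_range, mem_powersetCard]
        exact ⟨#S, by omega, hS.1, rfl⟩
    _ ≤ ∑ j ∈ range (k + 1), #(T.powersetCard j) := card_biUnion_le
    _ = ∑ j ∈ range (k + 1), (#T).choose j := by simp only [card_powersetCard]

theorem sum_range_choose_le_exp_mul_div_pow {m k : ℕ} (hkm : k ≤ m) :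
    ∑ j ∈ range (k + 1), (m.choose j : ℝ) ≤ (exp 1 * m / k) ^ k := by
  rcases Nat.eq_zero_or_pos k with rfl | hk
  · simp
  have hm : 0 < m := hk.trans_le hkm
  set x : ℝ := k / m
  have hx0 : 0 < x := by positivity
  have hx1 : x ≤ 1 := div_le_one_of_le₀ (by exact_mod_cast hkm) (by positivity)
  have key : (∑ j ∈ range (k + 1), (m.choose j : ℝ)) * x ^ k ≤ exp 1 ^ k :=
    calc (∑ j ∈ range (k + 1), (m.choose j : ℝ)) * x ^ k
        ≤ ∑ j ∈ range (k + 1), (m.choose j : ℝ) * x ^ j := by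
          rw [sum_mul]
          refine sum_le_sum fun j hj => mul_le_mul_of_nonneg_left ?_ (by positivity)
          exact pow_le_pow_of_le_one hx0.le hx1 (Nat.lt_succ_iff.1 (mem_range.1 hj))
      _ ≤ ∑ j ∈ range (m + 1), (m.choose j : ℝ) * x ^ j :=
          sum_le_sum_of_subset_of_nonneg (range_subset_range.2 (by omega))
            fun _ _ _ => by positivity
      _ = (x + 1) ^ m := by simp only [add_pow, one_pow, mul_one, mul_comm]
      _ ≤ exp x ^ m := by gcongr; exact add_one_le_exp x
      _ = exp 1 ^ k := by
          rw [← exp_nat_mul, ← exp_nat_mul]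
          congr 1
          simp only [x]
          field_simp
  calc _ ≤ exp 1 ^ k / x ^ k := by rwa [le_div_iff₀ (by positivity)]
    _ = (exp 1 * m / k) ^ k := by
        rw [← div_pow]
        congr 1
        simp only [x]
        field_simp

section LevelBounded

variable {α : Type*} [Fintype α] {ℓ : ℕ → ℕ} {s : ℕ}

def clampTop (f : α → Fin (s + 2)) : α → Fin (s + 1) := fun r => Fin.clamp (f r) s

def topLevel (f : α → Fin (s + 2)) : Finset α := {r | (f r : ℕ) = s + 1}

theorem topLevel_subset {f : α → Fin (s + 2)} :
    topLevel f ⊆ ({r | s ≤ (clampTop f r : ℕ)} : Finset α) := by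
  intro r
  simp +contextual [topLevel, clampTop]

theorem eq_of_clampTop_eq_of_topLevel_eq {f g : α → Fin (s + 2)}
    (hclamp : clampTop f = clampTop g) (htop : topLevel f = topLevel g) : f = g := by
  funext r
  have h1 := congrFun hclamp r
  have h2 : (f r : ℕ) = s + 1 ↔ (g r : ℕ) = s + 1 := by
    simpa [topLevel] using congrArg (r ∈ ·) htop
  simp only [clampTop, Fin.ext_iff, Fin.coe_clamp] at h1
  have := (f r).isLt
  have := (g r).isLt
  ext
  omega

variable [DecidableEq α]

-- The constraint at `i = 0` says `card α ≤ ℓ 0`; it makes the fiber bound uniform in `s`.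
variable (α) in
def levelBounded (ℓ : ℕ → ℕ) (s : ℕ) : Finset (α → Fin (s + 1)) :=
  {f | ∀ i ≤ s, #{r | i ≤ (f r : ℕ)} ≤ ℓ i}

theorem clampTop_mem_levelBounded {f : α → Fin (s + 2)} (hf : f ∈ levelBounded α ℓ (s + 1)) :
    clampTop f ∈ levelBounded α ℓ s := by
  simp only [levelBounded, mem_filter, mem_univ, true_and] at hf ⊢
  intro i hi
  convert hf i (by omega) using 3
  simp [clampTop, hi]

theorem card_topLevel_le {f : α → Fin (s + 2)} (hf : f ∈ levelBounded α ℓ (s + 1)) :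
    #(topLevel f) ≤ ℓ (s + 1) := by
  simp only [levelBounded, mem_filter, mem_univ, true_and] at hf
  convert hf (s + 1) le_rfl using 2
  ext r
  have := (f r).isLt
  simp only [topLevel, mem_filter, mem_univ, true_and]
  omega

theorem card_clampTop_fiber_le {g : α → Fin (s + 1)} (hg : g ∈ levelBounded α ℓ s) :
    #{f ∈ levelBounded α ℓ (s + 1) | clampTop f = g} ≤
      ∑ j ∈ range (ℓ (s + 1) + 1), (ℓ s).choose j := by
  set T : Finset α := {r | s ≤ (g r : ℕ)}
  have hT : #T ≤ ℓ s := by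
    simp only [levelBounded, mem_filter, mem_univ, true_and] at hg
    exact hg s le_rfl
  calc #{f ∈ levelBounded α ℓ (s + 1) | clampTop f = g}
      ≤ #{S ∈ T.powerset | #S ≤ ℓ (s + 1)} := by
        refine card_le_card_of_injOn topLevel (fun f hf => ?_) fun f hf f' hf' htop => ?_
        · simp only [coe_filter, Set.mem_ofPred_eq] at hf
          simp only [coe_filter, mem_powerset, Set.mem_ofPred_eq]
          refine ⟨?_, card_topLevel_le hf.1⟩
          have := topLevel_subset (f := f)
          rwa [hf.2] at this
        · simp only [coe_filter, Set.mem_ofPred_eq] at hf hf'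
          exact eq_of_clampTop_eq_of_topLevel_eq (hf.2.trans hf'.2.symm) htop
    _ ≤ ∑ j ∈ range (ℓ (s + 1) + 1), (#T).choose j :=
        card_filter_powerset_card_le_le_sum_choose T _
    _ ≤ ∑ j ∈ range (ℓ (s + 1) + 1), (ℓ s).choose j := by
        gcongr

theorem card_levelBounded_le (ℓ : ℕ → ℕ) (s : ℕ) :
    #(levelBounded α ℓ s) ≤ ∏ i ∈ Icc 1 s, ∑ j ∈ range (ℓ i + 1), (ℓ (i - 1)).choose j := by
  induction s with
  | zero => simpa using card_le_univ (levelBounded α ℓ 0)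
  | succ s ih =>
    calc #(levelBounded α ℓ (s + 1))
        ≤ (∑ j ∈ range (ℓ (s + 1) + 1), (ℓ s).choose j) * #(levelBounded α ℓ s) :=
          card_le_mul_card_image_of_maps_to (fun _ => clampTop_mem_levelBounded) _
            fun _ => card_clampTop_fiber_le
      _ ≤ (∑ j ∈ range (ℓ (s + 1) + 1), (ℓ s).choose j) *
            ∏ i ∈ Icc 1 s, ∑ j ∈ range (ℓ i + 1), (ℓ (i - 1)).choose j := by gcongr
      _ = ∏ i ∈ Icc 1 (s + 1), ∑ j ∈ range (ℓ i + 1), (ℓ (i - 1)).choose j := by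
          rw [prod_Icc_succ_top (by omega), mul_comm, Nat.add_sub_cancel]

theorem coe_levelBounded_of_card_le (h : Fintype.card α ≤ ℓ 0) :
    (levelBounded α ℓ s : Set (α → Fin (s + 1))) =
      {f | ∀ i, 1 ≤ i → i ≤ s → {r | i ≤ (f r : ℕ)}.ncard ≤ ℓ i} := by
  ext f
  simp only [levelBounded, coe_filter, mem_univ, true_and, Set.mem_ofPred_eq,
    Set.ncard_eq_toFinset_card', Set.toFinset_ofPred]
  refine ⟨fun hf i hi _ => hf i ‹_›, fun hf i hi => ?_⟩
  rcases Nat.eq_zero_or_pos i with rfl | hi0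
  · exact (card_le_univ _).trans h
  · exact hf i hi0 hi

end LevelBounded

theorem stmt1_general (s : ℕ) (ℓ : ℕ → ℕ)
    (hanti : ∀ i, 1 ≤ i → i ≤ s → ℓ i ≤ ℓ (i - 1)) :
    (Set.ncard {f : Fin (ℓ 0) → Fin (s + 1) |
        ∀ i, 1 ≤ i → i ≤ s → ({r : Fin (ℓ 0) | i ≤ (f r : ℕ)}.ncard ≤ ℓ i)} : ℝ) ≤
      ∏ i ∈ Finset.Icc 1 s, (Real.exp 1 * ℓ (i - 1) / ℓ i) ^ ℓ i := by
  rw [← coe_levelBounded_of_card_le (Fintype.card_fin _).le, Set.ncard_coe_finset]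
  calc (#(levelBounded (Fin (ℓ 0)) ℓ s) : ℝ)
      ≤ ∏ i ∈ Icc 1 s, ∑ j ∈ range (ℓ i + 1), ((ℓ (i - 1)).choose j : ℝ) := by
        exact_mod_cast card_levelBounded_le ℓ s
    _ ≤ ∏ i ∈ Icc 1 s, (exp 1 * ℓ (i - 1) / ℓ i) ^ ℓ i :=
        prod_le_prod (fun _ _ => by positivity) fun i hi =>
          sum_range_choose_le_exp_mul_div_pow (hanti i (mem_Icc.1 hi).1 (mem_Icc.1 hi).2)

theorem stmt1 (s : ℕ) (ℓ : ℕ → ℕ) (hpos : ∀ i ≤ s, 0 < ℓ i)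
    (hanti : ∀ i, 1 ≤ i → i ≤ s → ℓ i ≤ ℓ (i - 1)) :
    (Set.ncard {f : Fin (ℓ 0) → Fin (s + 1) |
        ∀ i, 1 ≤ i → i ≤ s → ({r : Fin (ℓ 0) | i ≤ (f r : ℕ)}.ncard ≤ ℓ i)} : ℝ) ≤
      ∏ i ∈ Finset.Icc 1 s, (Real.exp 1 * ℓ (i - 1) / ℓ i) ^ ℓ i :=
  stmt1_general s ℓ hanti
end

section
/- Fix 1/√m ≤ b ≤ 1 with m ≤ N, and define m₁ = m₁(b) > 0 by the equation m₁ log(eN/m₁) = (√m / b) log(eN/m). Then log(m/m₁(b)) ≤ 2 log(e b √m). -/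
/-!
The map `f z = z log (eN / z)` is increasing on `(0, N]` (its derivative is `log (N / z) ≥ 0`), and
`m₁` is defined by `f m₁ = (√m / b) log (eN / m)`. With `w = e b √m ≥ e`, the point `t = m / w²`
satisfies `f t ≤ f m₁`, which after dividing by `m / w²` reads `L + 2 log w ≤ e L w` for
`L = log (eN / m) ≥ 1`. Hence `m₁ ≥ t` and `log (m / m₁) ≤ log (m / t) = 2 log w`.
-/

open Real Set

theorem strictMonoOn_mul_log_div {c : ℝ} (hc : 0 < c) :
    StrictMonoOn (fun z ↦ z * log (c / z)) (Ioc 0 (c / exp 1)) := by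
  have h_eq :
      EqOn (fun z ↦ z * log c - z * log z) (fun z ↦ z * log (c / z)) (Ioc 0 (c / exp 1)) :=
    fun z hz ↦ by simp only [log_div hc.ne' hz.1.ne']; ring
  refine StrictMonoOn.congr ?_ h_eq
  refine strictMonoOn_of_deriv_pos (convex_Ioc _ _) (by fun_prop) fun z hz ↦ ?_
  rw [interior_Ioc] at hz
  have hd : HasDerivAt (fun z ↦ z * log c - z * log z) (log c - (log z + 1)) z :=
    ((hasDerivAt_mul_const (log c)).sub (hasDerivAt_mul_log hz.1.ne'))
  rw [hd.deriv]
  have : log z < log c - 1 := by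
    rw [← log_exp 1, ← log_div hc.ne' (exp_pos 1).ne']
    exact log_lt_log hz.1 hz.2
  linarith

theorem mul_log_div_sq_le {c m w : ℝ} (hm : 0 < m) (hL : 1 ≤ log (c / m)) (hw : exp 1 ≤ w) :
    m / w ^ 2 * log (c / (m / w ^ 2)) ≤ exp 1 * m / w * log (c / m) := by
  have hw0 : 0 < w := (exp_pos 1).trans_le hw
  have hcm : c / m ≠ 0 := by rintro h; norm_num [h] at hL
  have hlog : log (c / (m / w ^ 2)) = log (c / m) + 2 * log w := by
    rw [div_div_eq_mul_div, mul_div_right_comm, log_mul hcm (by positivity), log_pow]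
    push_cast; ring
  have hlogw : 2 * log w ≤ w := by
    have htangent := log_le_sub_one_of_pos (div_pos hw0 (exp_pos 1))
    rw [log_div hw0.ne' (exp_pos 1).ne', log_exp] at htangent
    have hdiv : w / exp 1 ≤ w / 2 :=
      div_le_div_of_nonneg_left hw0.le two_pos (by linarith [exp_one_gt_d9])
    linarith
  have hw1 : 1 ≤ w := (one_le_exp zero_le_one).trans hw
  have hkey : log (c / m) + 2 * log w ≤ exp 1 * log (c / m) * w := by
    nlinarith [exp_one_gt_d9, mul_le_mul hL hw1 zero_le_one (by linarith)]
  rw [hlog, div_mul_eq_mul_div, div_mul_eq_mul_div, div_le_div_iff₀ (by positivity) hw0]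
  calc m * (log (c / m) + 2 * log w) * w ≤ m * (exp 1 * log (c / m) * w) * w := by gcongr
    _ = exp 1 * m * log (c / m) * w ^ 2 := by ring

theorem stmt7_general (m N : ℕ) (hm : 1 ≤ m) (hmN : m ≤ N) (b : ℝ)
    (hb1 : 1 / Real.sqrt m ≤ b)
    (m₁ : ℝ) (hm₁pos : 0 < m₁) (hm₁N : m₁ ≤ N)
    (heq : m₁ * Real.log (Real.exp 1 * N / m₁) =
      Real.sqrt m / b * Real.log (Real.exp 1 * N / m)) :
    Real.log (m / m₁) ≤ 2 * Real.log (Real.exp 1 * b * Real.sqrt m) := by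
  have hm0 : (0 : ℝ) < m := by exact_mod_cast hm
  have hmN' : (m : ℝ) ≤ N := by exact_mod_cast hmN
  have hN0 : (0 : ℝ) < N := hm0.trans_le hmN'
  have hsqrt : 0 < √(m : ℝ) := sqrt_pos.2 hm0
  have hb0 : 0 < b := lt_of_lt_of_le (by positivity) hb1
  set w := exp 1 * b * √(m : ℝ) with hw_def
  have hw : exp 1 ≤ w := by
    rw [hw_def, mul_assoc]
    exact le_mul_of_one_le_right (exp_pos 1).le (by rwa [div_le_iff₀ hsqrt] at hb1)
  have hw1 : 1 ≤ w ^ 2 := one_le_pow₀ ((one_le_exp zero_le_one).trans hw)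
  have hL : 1 ≤ log (exp 1 * N / m) := by
    rw [mul_div_assoc, log_mul (exp_pos 1).ne' (div_pos hN0 hm0).ne', log_exp]
    linarith [log_nonneg ((one_le_div hm0).2 hmN')]
  have hmono := strictMonoOn_mul_log_div (mul_pos (exp_pos 1) hN0)
  rw [mul_div_cancel_left₀ _ (exp_pos 1).ne'] at hmono
  have ht : m / w ^ 2 ≤ m₁ := by
    refine (hmono.le_iff_le ⟨by positivity, (div_le_self hm0.le hw1).trans hmN'⟩
      ⟨hm₁pos, hm₁N⟩).1 ?_
    have hcoef : √(m : ℝ) / b = exp 1 * m / w := by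
      rw [hw_def]; field_simp; rw [sq_sqrt hm0.le]
    rw [heq, hcoef]
    exact mul_log_div_sq_le hm0 hL hw
  calc log (m / m₁) ≤ log (m / (m / w ^ 2)) :=
        log_le_log (by positivity) (div_le_div_of_nonneg_left hm0.le (by positivity) ht)
    _ = 2 * log w := by rw [div_div_cancel₀ hm0.ne', log_pow]; norm_num

theorem stmt7 (m N : ℕ) (hm : 1 ≤ m) (hmN : m ≤ N) (b : ℝ)
    (hb1 : 1 / Real.sqrt m ≤ b) (hb2 : b ≤ 1)
    (m₁ : ℝ) (hm₁pos : 0 < m₁) (hm₁N : m₁ ≤ N)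
    (heq : m₁ * Real.log (Real.exp 1 * N / m₁) =
      Real.sqrt m / b * Real.log (Real.exp 1 * N / m)) :
    Real.log (m / m₁) ≤ 2 * Real.log (Real.exp 1 * b * Real.sqrt m) :=
  stmt7_general m N hm hmN b hb1 m₁ hm₁pos hm₁N heq
end

section
/- Let E_1, ..., E_n be independent symmetric exponential random variables with variance 1 (density 2^{-1/2} exp(−√2|t|)). Then there is an absolute constant C such that for every x ∈ R^n and every p ≥ 1, (E|∑_{i=1}^n x_i E_i|^p)^{1/p} ≤ C(√p |x| + p ‖x‖_∞). -/
/-!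
For `|u| ≤ 1` a standard symmetric exponential variable has moment generating function
`2 / (2 - u²) ≤ exp (u²)`, so by independence `S = ∑ xᵢ Eᵢ` satisfies
`𝔼 exp (t S) ≤ exp (t² |x|²)` whenever `|t| ‖x‖_∞ ≤ 1`. Together with the pointwise bound
`|s| ^ p ≤ (p / t) ^ p (exp (t s) + exp (-t s))` and the scale `t = p / (√p |x| + p ‖x‖_∞)`,
which makes `t² |x|² ≤ p`, this gives `𝔼 |S| ^ p ≤ 2 (e (√p |x| + p ‖x‖_∞)) ^ p`, i.e. the
estimate with `C = 2e`.
-/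

open MeasureTheory ProbabilityTheory Real Set

section LaplaceIntegral

variable {b u : ℝ}

lemma integrableOn_exp_mul_sub_mul_abs_Ioi (hu : |u| < b) :
    IntegrableOn (fun s => exp (u * s - b * |s|)) (Ioi 0) := by
  refine (integrableOn_exp_mul_Ioi (a := u - b) (by linarith [le_abs_self u]) 0).congr_fun
    (fun s hs => ?_) measurableSet_Ioi
  simp only [abs_of_pos (mem_Ioi.1 hs)]
  ring_nf

lemma integrableOn_exp_mul_sub_mul_abs_Iic (hu : |u| < b) :
    IntegrableOn (fun s => exp (u * s - b * |s|)) (Iic 0) := by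
  refine (integrableOn_exp_mul_Iic (a := u + b) (by linarith [neg_abs_le u]) 0).congr_fun
    (fun s hs => ?_) measurableSet_Iic
  simp only [abs_of_nonpos (mem_Iic.1 hs)]
  ring_nf

lemma integrable_exp_mul_sub_mul_abs (hu : |u| < b) :
    Integrable (fun s => exp (u * s - b * |s|)) := by
  rw [← integrableOn_univ, ← Iic_union_Ioi (a := (0 : ℝ)), integrableOn_union]
  exact ⟨integrableOn_exp_mul_sub_mul_abs_Iic hu, integrableOn_exp_mul_sub_mul_abs_Ioi hu⟩

lemma integral_exp_mul_sub_mul_abs (hu : |u| < b) :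
    ∫ s, exp (u * s - b * |s|) = 2 * b / (b ^ 2 - u ^ 2) := by
  have hneg : u - b < 0 := by linarith [le_abs_self u]
  have hpos : 0 < u + b := by linarith [neg_abs_le u]
  have h_Ioi : ∫ s in Ioi 0, exp (u * s - b * |s|) = (b - u)⁻¹ := by
    rw [setIntegral_congr_fun measurableSet_Ioi
      (g := fun s => exp ((u - b) * s)) (fun s hs => by simp only [abs_of_pos (mem_Ioi.1 hs)]; ring_nf),
      integral_exp_mul_Ioi hneg]
    rw [mul_zero, exp_zero, neg_div, ← div_neg, neg_sub, one_div]
  have h_Iic : ∫ s in Iic 0, exp (u * s - b * |s|) = (u + b)⁻¹ := by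
    rw [setIntegral_congr_fun measurableSet_Iic (g := fun s => exp ((u + b) * s))
      (fun s hs => by simp only [abs_of_nonpos (mem_Iic.1 hs)]; ring_nf),
      integral_exp_mul_Iic hpos, mul_zero, exp_zero, one_div]
  rw [← intervalIntegral.integral_Iic_add_Ioi (integrableOn_exp_mul_sub_mul_abs_Iic hu)
    (integrableOn_exp_mul_sub_mul_abs_Ioi hu), h_Ioi, h_Iic]
  rw [inv_add_inv hpos.ne' (by linarith)]
  congr 1 <;> ring

end LaplaceIntegral

section SymmetricExponential

variable {Ω : Type*} [MeasurableSpace Ω] {μ : Measure Ω} {X : Ω → ℝ}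

lemma mgf_of_map_eq_withDensity_exp_neg_abs (hX : Measurable X) {c b u : ℝ} (hc : 0 ≤ c)
    (hu : |u| < b)
    (hmap : μ.map X = volume.withDensity (fun s => ENNReal.ofReal (c * exp (-(b * |s|))))) :
    Integrable (fun ω => exp (u * X ω)) μ ∧ mgf X μ u = c * (2 * b / (b ^ 2 - u ^ 2)) := by
  have h_dens : Measurable fun s : ℝ => ENNReal.ofReal (c * exp (-(b * |s|))) := by fun_prop
  have h_exp : Measurable fun s : ℝ => exp (u * s) := by fun_prop
  have h_smul : (fun s : ℝ => (ENNReal.ofReal (c * exp (-(b * |s|)))).toReal • exp (u * s)) =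
      fun s => c * exp (u * s - b * |s|) := by
    ext s
    rw [ENNReal.toReal_ofReal (by positivity), smul_eq_mul, mul_assoc, ← exp_add]
    ring_nf
  have h_int_map : Integrable (fun s => exp (u * s)) (μ.map X) := by
    rw [hmap, integrable_withDensity_iff_integrable_smul' h_dens
      (ae_of_all _ fun _ => ENNReal.ofReal_lt_top), h_smul]
    exact (integrable_exp_mul_sub_mul_abs hu).const_mul c
  refine ⟨(integrable_map_measure h_exp.aestronglyMeasurable hX.aemeasurable).mp h_int_map, ?_⟩
  rw [← congrFun (mgf_id_map hX.aemeasurable) u, mgf, hmap,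
    integral_withDensity_eq_integral_toReal_smul h_dens
      (ae_of_all _ fun _ => ENNReal.ofReal_lt_top)]
  simp only [id, h_smul]
  rw [integral_const_mul, integral_exp_mul_sub_mul_abs hu]

lemma mgf_le_exp_sq_of_map_eq_symmExp (hX : Measurable X) {u : ℝ} (hu : |u| ≤ 1)
    (hmap : μ.map X = volume.withDensity
      (fun s => ENNReal.ofReal ((√2)⁻¹ * exp (-(√2 * |s|))))) :
    Integrable (fun ω => exp (u * X ω)) μ ∧ mgf X μ u ≤ exp (u ^ 2) := by
  have h_sqrt : (1 : ℝ) < √2 := by rw [lt_sqrt zero_le_one]; norm_num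
  obtain ⟨h_int, h_mgf⟩ :=
    mgf_of_map_eq_withDensity_exp_neg_abs hX (by positivity) (hu.trans_lt h_sqrt) hmap
  refine ⟨h_int, ?_⟩
  have hu2 : u ^ 2 ≤ 1 := by rw [← sq_abs]; nlinarith [abs_nonneg u]
  have h_val : (√2)⁻¹ * (2 * √2 / (√2 ^ 2 - u ^ 2)) = 2 / (2 - u ^ 2) := by
    rw [sq_sqrt zero_le_two]
    field_simp
  rw [h_mgf, h_val, div_le_iff₀ (by linarith)]
  nlinarith [add_one_le_exp (u ^ 2), sq_nonneg u]

end SymmetricExponential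

section Moments

variable {Ω : Type*} [MeasurableSpace Ω] {μ : Measure Ω}

theorem iIndepFun.mgf_sum_le_exp_sum {ι : Type*} {X : ι → Ω → ℝ} (h_indep : iIndepFun X μ)
    (h_meas : ∀ i, Measurable (X i)) {s : Finset ι} {t : ℝ} {c : ι → ℝ}
    (h : ∀ i ∈ s, Integrable (fun ω => exp (t * X i ω)) μ ∧ mgf (X i) μ t ≤ exp (c i)) :
    Integrable (fun ω => exp (t * (∑ i ∈ s, X i) ω)) μ ∧
      mgf (∑ i ∈ s, X i) μ t ≤ exp (∑ i ∈ s, c i) := by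
  have := h_indep.isProbabilityMeasure
  refine ⟨h_indep.integrable_exp_mul_sum h_meas fun i hi => (h i hi).1, ?_⟩
  rw [h_indep.mgf_sum h_meas, exp_sum]
  exact Finset.prod_le_prod (fun _ _ => mgf_nonneg) fun i hi => (h i hi).2

lemma integral_abs_rpow_le_of_mgf_le {X : Ω → ℝ} {t p B : ℝ} (hp : 0 ≤ p) (ht : 0 < t)
    (h_int_pos : Integrable (fun ω => exp (t * X ω)) μ)
    (h_int_neg : Integrable (fun ω => exp (-t * X ω)) μ)
    (h_pos : mgf X μ t ≤ B) (h_neg : mgf X μ (-t) ≤ B) :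
    ∫ ω, |X ω| ^ p ∂μ ≤ 2 * (p / t) ^ p * B := by
  have h_pointwise : ∀ ω, |X ω| ^ p ≤ (p / t) ^ p * (exp (t * X ω) + exp (-t * X ω)) := by
    intro ω
    refine (rpow_abs_le_mul_max_exp (X ω) hp ht.ne').trans ?_
    rw [abs_of_pos ht]
    gcongr
    exact max_le_add_of_nonneg (exp_pos _).le (exp_pos _).le
  calc ∫ ω, |X ω| ^ p ∂μ
      ≤ ∫ ω, (p / t) ^ p * (exp (t * X ω) + exp (-t * X ω)) ∂μ :=
        integral_mono_of_nonneg (ae_of_all _ fun _ => by positivity)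
          ((h_int_pos.add h_int_neg).const_mul _) (ae_of_all _ h_pointwise)
    _ = (p / t) ^ p * (mgf X μ t + mgf X μ (-t)) := by
        rw [integral_const_mul, integral_add h_int_pos h_int_neg, mgf, mgf]
    _ ≤ (p / t) ^ p * (B + B) := by gcongr
    _ = 2 * (p / t) ^ p * B := by ring

lemma integral_abs_rpow_rpow_inv_le_of_mgf_le_exp {X : Ω → ℝ} {t p : ℝ} (hp : 1 ≤ p)
    (ht : 0 < t) (h_int_pos : Integrable (fun ω => exp (t * X ω)) μ)
    (h_int_neg : Integrable (fun ω => exp (-t * X ω)) μ)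
    (h_pos : mgf X μ t ≤ exp p) (h_neg : mgf X μ (-t) ≤ exp p) :
    (∫ ω, |X ω| ^ p ∂μ) ^ (1 / p) ≤ 2 * exp 1 * (p / t) := by
  have hp0 : 0 < p := zero_lt_one.trans_le hp
  have h_moment := integral_abs_rpow_le_of_mgf_le hp0.le ht h_int_pos h_int_neg h_pos h_neg
  rw [← exp_one_rpow, mul_assoc, ← mul_rpow (by positivity) (exp_pos 1).le] at h_moment
  have h_two : (2 : ℝ) ^ (1 / p) ≤ 2 :=
    rpow_le_self_of_one_le one_le_two ((div_le_one hp0).2 hp)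
  calc (∫ ω, |X ω| ^ p ∂μ) ^ (1 / p)
      ≤ (2 * (p / t * exp 1) ^ p) ^ (1 / p) :=
        rpow_le_rpow (integral_nonneg fun _ => by positivity) h_moment (by positivity)
    _ = 2 ^ (1 / p) * (p / t * exp 1) := by
        rw [mul_rpow zero_le_two (by positivity), ← rpow_mul (by positivity),
          mul_one_div_cancel hp0.ne', rpow_one]
    _ ≤ 2 * exp 1 * (p / t) := by
        rw [mul_comm (p / t), ← mul_assoc]
        gcongr

end Moments

section WeightedSum

variable {Ω ι : Type*} [MeasurableSpace Ω] [Fintype ι] {μ : Measure Ω} {E : ι → Ω → ℝ}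

lemma mgf_sum_mul_le_of_map_eq_symmExp (h_meas : ∀ i, Measurable (E i))
    (h_indep : iIndepFun E μ)
    (h_law : ∀ i, μ.map (E i) = volume.withDensity
      (fun s => ENNReal.ofReal ((√2)⁻¹ * exp (-(√2 * |s|)))))
    (x : ι → ℝ) {t : ℝ} (ht : ∀ i, |t * x i| ≤ 1) :
    Integrable (fun ω => exp (t * ∑ i, x i * E i ω)) μ ∧
      mgf (fun ω => ∑ i, x i * E i ω) μ t ≤ exp (t ^ 2 * ∑ i, x i ^ 2) := by
  have h_sum : (fun ω => ∑ i, x i * E i ω) = ∑ i, (fun s => x i * s) ∘ E i := by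
    ext ω
    simp only [Finset.sum_apply, Function.comp_apply]
  have h_coord : ∀ i ∈ Finset.univ, Integrable (fun ω => exp (t * (x i * E i ω))) μ ∧
      mgf (fun ω => x i * E i ω) μ t ≤ exp ((t * x i) ^ 2) := by
    intro i _
    obtain ⟨h_int, h_mgf⟩ := mgf_le_exp_sq_of_map_eq_symmExp (h_meas i) (ht i) (h_law i)
    refine ⟨h_int.congr (ae_of_all _ fun ω => by ring_nf), ?_⟩
    rwa [mgf_const_mul, mul_comm]
  obtain ⟨h_int, h_mgf⟩ := iIndepFun.mgf_sum_le_exp_sum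
    (h_indep.comp (fun i s => x i * s) fun i => measurable_const.mul measurable_id)
    (fun i => (h_meas i).const_mul (x i)) h_coord
  refine ⟨h_int.congr (ae_of_all _ fun ω => by rw [← h_sum]), ?_⟩
  rw [h_sum, Finset.mul_sum]
  simpa only [mul_pow] using h_mgf

lemma integral_abs_sum_mul_rpow_rpow_inv_le (h_meas : ∀ i, Measurable (E i))
    (h_indep : iIndepFun E μ)
    (h_law : ∀ i, μ.map (E i) = volume.withDensity
      (fun s => ENNReal.ofReal ((√2)⁻¹ * exp (-(√2 * |s|)))))
    (x : ι → ℝ) {p t : ℝ} (hp : 1 ≤ p) (ht : 0 < t) (h_coeff : ∀ i, t * |x i| ≤ 1)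
    (h_var : t ^ 2 * ∑ i, x i ^ 2 ≤ p) :
    (∫ ω, |∑ i, x i * E i ω| ^ p ∂μ) ^ (1 / p) ≤ 2 * exp 1 * (p / t) := by
  have h_mgf : ∀ s, |s| = t → Integrable (fun ω => exp (s * ∑ i, x i * E i ω)) μ ∧
      mgf (fun ω => ∑ i, x i * E i ω) μ s ≤ exp p := by
    intro s hs
    obtain ⟨h_int, h_bound⟩ := mgf_sum_mul_le_of_map_eq_symmExp h_meas h_indep h_law x
      fun i => by rw [abs_mul, hs]; exact h_coeff i
    exact ⟨h_int, h_bound.trans (exp_le_exp.2 (by rwa [← sq_abs s, hs]))⟩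
  obtain ⟨h_int_pos, h_pos⟩ := h_mgf t (abs_of_pos ht)
  obtain ⟨h_int_neg, h_neg⟩ := h_mgf (-t) (by rw [abs_neg, abs_of_pos ht])
  exact integral_abs_rpow_rpow_inv_le_of_mgf_le_exp hp ht h_int_pos h_int_neg h_pos h_neg

end WeightedSum

theorem stmt13 :
    ∃ C : ℝ, 0 < C ∧
      ∀ (n : ℕ) (Ω : Type) (_ : MeasureSpace Ω), IsProbabilityMeasure (ℙ : Measure Ω) →
        ∀ E : Fin n → Ω → ℝ, (∀ i, Measurable (E i)) →
          iIndepFun E ℙ →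
          (∀ i, Measure.map (E i) ℙ =
            (volume : Measure ℝ).withDensity
              (fun s => ENNReal.ofReal
                ((Real.sqrt 2)⁻¹ * Real.exp (-(Real.sqrt 2 * |s|))))) →
          ∀ x : Fin n → ℝ, ∀ p : ℝ, 1 ≤ p →
            (∫ ω, |∑ i, x i * E i ω| ^ p) ^ (1 / p) ≤
              C * (Real.sqrt p * Real.sqrt (∑ i, x i ^ 2) + p * ⨆ i, |x i|) := by
  refine ⟨2 * exp 1, by positivity, ?_⟩
  intro n Ω _ _ E h_meas h_indep h_law x p hp
  have hp0 : 0 < p := zero_lt_one.trans_le hp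
  set σ := √(∑ i, x i ^ 2)
  set M := ⨆ i, |x i|
  have hM : ∀ i, |x i| ≤ M := le_ciSup (Set.finite_range _).bddAbove
  have hM0 : 0 ≤ M := Real.iSup_nonneg fun i => abs_nonneg (x i)
  set A := √p * σ + p * M
  rcases (show 0 ≤ A by positivity).eq_or_lt with hA | hA
  · have hx : ∀ i, x i = 0 := fun i => abs_nonpos_iff.1 <| (hM i).trans <|
      nonpos_of_mul_nonpos_right (by linarith [show 0 ≤ √p * σ by positivity]) hp0
    simp [hx, zero_rpow hp0.ne', zero_rpow (inv_ne_zero hp0.ne'), ← hA]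
  have h_coeff : ∀ i, p / A * |x i| ≤ 1 := fun i => by
    rw [div_mul_eq_mul_div, div_le_one hA]
    nlinarith [hM i, show 0 ≤ √p * σ by positivity]
  have h_var : (p / A) ^ 2 * ∑ i, x i ^ 2 ≤ p := by
    have h_σ : p / A * σ ≤ √p := by
      rw [div_mul_eq_mul_div, div_le_iff₀ hA, mul_add, ← mul_assoc, mul_self_sqrt hp0.le]
      linarith [show 0 ≤ √p * (p * M) by positivity]
    have := pow_le_pow_left₀ (by positivity) h_σ 2
    rwa [mul_pow, sq_sqrt (by positivity), sq_sqrt hp0.le] at this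
  calc (∫ ω, |∑ i, x i * E i ω| ^ p) ^ (1 / p)
      ≤ 2 * exp 1 * (p / (p / A)) := integral_abs_sum_mul_rpow_rpow_inv_le h_meas h_indep h_law
        x hp (div_pos hp0 hA) h_coeff h_var
    _ = 2 * exp 1 * A := by rw [div_div_cancel₀ hp0.ne']
end
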